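/- arXiv:1905.09333 — 2 statements merged into one kernel-verified Lean document; each statement's English description precedes it below -/
import Mathlib

section
/- On a graded algebra of differential forms with values in a Lie algebra, the graded commutator L_ξ^ω := [ι_ξ, d_ω] of the contraction ι_ξ (degree 0, for odd vector field ξ) with the covariant derivative d_ω (degree 1 derivation) is itself a derivation, and [L_ξ^ω, ι_ξ] = [L_ξ, ι_ξ], i.e. the result is independent of the connection ω. -/
/-!
Contraction `ι` is an even derivation and `d_ω = d + ad ω` an odd one, so their commutator is
again an odd derivation. For the second claim, the derivation rule for `ι` says exactly
`[ι, ad a] = ad (ι a)`; hence `L_ξ^ω = L_ξ + ad (ι ω)`, and the correction term contributes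
`[ad (ι ω), ι] = -ad (ι ι ω) = 0` to `[L_ξ^ω, ι]`.
-/

namespace GradedForms

variable {R L : Type*} [CommRing R] [AddCommGroup L] [Module R L]

def IsOddDerivation (𝒜 : ℤ → Submodule R L) (br : L →ₗ[R] L →ₗ[R] L) (D : L →ₗ[R] L) :
    Prop :=
  ∀ (i : ℤ) (x y : L), x ∈ 𝒜 i →
    D (br x y) = br (D x) y + (((-1 : ℤˣ) ^ i : ℤˣ) : ℤ) • br x (D y)

variable {𝒜 : ℤ → Submodule R L} {br : L →ₗ[R] L →ₗ[R] L}

theorem IsOddDerivation.add {D E : L →ₗ[R] L} (hD : IsOddDerivation 𝒜 br D)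
    (hE : IsOddDerivation 𝒜 br E) : IsOddDerivation 𝒜 br (D + E) := by
  intro i x y hx
  simp only [LinearMap.add_apply, map_add, hD i x y hx, hE i x y hx,
    smul_add]
  abel

theorem IsOddDerivation.commutator {D ι : L →ₗ[R] L} (hD : IsOddDerivation 𝒜 br D)
    (hι_mem : ∀ (i : ℤ) (x : L), x ∈ 𝒜 i → ι x ∈ 𝒜 i)
    (hι_der : ∀ x y : L, ι (br x y) = br (ι x) y + br x (ι y)) :
    IsOddDerivation 𝒜 br (ι ∘ₗ D - D ∘ₗ ι) := by
  intro i x y hx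
  simp only [LinearMap.sub_apply, LinearMap.comp_apply, map_sub,
    hD i x y hx, hι_der, map_add, map_zsmul, hD i (ι x) y (hι_mem i x hx), hD i x (ι y) hx,
    smul_add, smul_sub]
  abel

theorem comp_sub_comp_eq_of_derivation {ι : L →ₗ[R] L}
    (hι_der : ∀ x y : L, ι (br x y) = br (ι x) y + br x (ι y)) (a : L) :
    ι ∘ₗ br a - br a ∘ₗ ι = br (ι a) := by
  ext x
  simp [hι_der]

end GradedForms

open GradedForms

theorem lie_derivative_commutator_independent_of_connection_general
    {R L : Type*} [CommRing R] [AddCommGroup L] [Module R L]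
    (𝒜 : ℤ → Submodule R L)
    (br : L →ₗ[R] L →ₗ[R] L)
    (iota d : L →ₗ[R] L) (ω : L)
    -- `iota` preserves total degree and is a degree-0 derivation of the bracket
    (hiota_mem : ∀ (i : ℤ) (x : L), x ∈ 𝒜 i → iota x ∈ 𝒜 i)
    (hiota_der : ∀ x y : L, iota (br x y) = br (iota x) y + br x (iota y))
    -- `d` is a degree-1 graded derivation of the bracket
    (hd_der : ∀ (i : ℤ) (x y : L), x ∈ 𝒜 i →
      d (br x y) = br (d x) y + (((-1 : ℤˣ) ^ i : ℤˣ) : ℤ) • br x (d y))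
    -- bracketing with `ω` is a degree-1 graded derivation (graded Jacobi for `ω`)
    (had_der : ∀ (i : ℤ) (x y : L), x ∈ 𝒜 i →
      br ω (br x y) = br (br ω x) y + (((-1 : ℤˣ) ^ i : ℤˣ) : ℤ) • br x (br ω y))
    -- `ι_ξ ω` is a zero-form, hence killed by a second contraction
    (hι2ω : iota (iota ω) = 0) :
    -- `L_ξ^ω = [ι_ξ, d_ω]` is a degree-1 graded derivation of the bracket ...
    (∀ (i : ℤ) (x y : L), x ∈ 𝒜 i →
      (iota ∘ₗ (d + br ω) - (d + br ω) ∘ₗ iota) (br x y)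
        = br ((iota ∘ₗ (d + br ω) - (d + br ω) ∘ₗ iota) x) y
          + (((-1 : ℤˣ) ^ i : ℤˣ) : ℤ) • br x ((iota ∘ₗ (d + br ω) - (d + br ω) ∘ₗ iota) y)) ∧
    -- ... and `[L_ξ^ω, ι_ξ] = [L_ξ, ι_ξ]`, independently of `ω`
    (iota ∘ₗ (d + br ω) - (d + br ω) ∘ₗ iota) ∘ₗ iota
        - iota ∘ₗ ((iota ∘ₗ (d + br ω) - (d + br ω) ∘ₗ iota))
      = (iota ∘ₗ d - d ∘ₗ iota) ∘ₗ iota - iota ∘ₗ (iota ∘ₗ d - d ∘ₗ iota) := by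
  refine ⟨IsOddDerivation.commutator (IsOddDerivation.add hd_der had_der) hiota_mem hiota_der,
    ?_⟩
  have hLξω : iota ∘ₗ (d + br ω) - (d + br ω) ∘ₗ iota
      = (iota ∘ₗ d - d ∘ₗ iota) + br (iota ω) := by
    rw [← comp_sub_comp_eq_of_derivation hiota_der, LinearMap.comp_add, LinearMap.add_comp]
    abel
  have hcorrection : br (iota ω) ∘ₗ iota - iota ∘ₗ br (iota ω) = 0 := by
    rw [← neg_sub, comp_sub_comp_eq_of_derivation hiota_der, hι2ω, map_zero, neg_zero]
  rw [hLξω, LinearMap.add_comp, LinearMap.comp_add, ← sub_eq_zero, ← hcorrection]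
  abel

/-- Abstract model of the graded algebra of Lie-algebra valued differential forms, graded by
total degree.  `iota` is the contraction `ι_ξ` with an odd vector field `ξ` (a degree-0
derivation of the bracket), `d` is the de Rham differential and `br ω ·` is the bracket with a
connection one-form `ω`, so that `d_ω = d + [ω, ·]` is the covariant derivative (a degree-1
derivation).  Then the graded commutator `L_ξ^ω := [ι_ξ, d_ω] = ι_ξ ∘ d_ω - d_ω ∘ ι_ξ` is
itself a (degree-1, graded) derivation, and `[L_ξ^ω, ι_ξ] = [L_ξ, ι_ξ]` where
`L_ξ := [ι_ξ, d]`, i.e. the result is independent of the connection `ω`.  (The hypothesis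
`hι2ω` records that `ι_ξ ω` is a zero-form, which is annihilated by a further contraction.) -/
theorem lie_derivative_commutator_independent_of_connection
    {R L : Type*} [CommRing R] [AddCommGroup L] [Module R L]
    (𝒜 : ℤ → Submodule R L)
    (br : L →ₗ[R] L →ₗ[R] L)
    (iota d : L →ₗ[R] L) (ω : L)
    (hω : ω ∈ 𝒜 1)
    -- `iota` preserves total degree and is a degree-0 derivation of the bracket
    (hiota_mem : ∀ (i : ℤ) (x : L), x ∈ 𝒜 i → iota x ∈ 𝒜 i)
    (hiota_der : ∀ x y : L, iota (br x y) = br (iota x) y + br x (iota y))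
    -- `d` is a degree-1 graded derivation of the bracket
    (hd_mem : ∀ (i : ℤ) (x : L), x ∈ 𝒜 i → d x ∈ 𝒜 (i + 1))
    (hd_der : ∀ (i : ℤ) (x y : L), x ∈ 𝒜 i →
      d (br x y) = br (d x) y + (((-1 : ℤˣ) ^ i : ℤˣ) : ℤ) • br x (d y))
    -- bracketing with `ω` is a degree-1 graded derivation (graded Jacobi for `ω`)
    (had_mem : ∀ (i : ℤ) (x : L), x ∈ 𝒜 i → br ω x ∈ 𝒜 (i + 1))
    (had_der : ∀ (i : ℤ) (x y : L), x ∈ 𝒜 i →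
      br ω (br x y) = br (br ω x) y + (((-1 : ℤˣ) ^ i : ℤˣ) : ℤ) • br x (br ω y))
    -- `ι_ξ ω` is a zero-form, hence killed by a second contraction
    (hι2ω : iota (iota ω) = 0) :
    -- `L_ξ^ω = [ι_ξ, d_ω]` is a degree-1 graded derivation of the bracket ...
    (∀ (i : ℤ) (x y : L), x ∈ 𝒜 i →
      (iota ∘ₗ (d + br ω) - (d + br ω) ∘ₗ iota) (br x y)
        = br ((iota ∘ₗ (d + br ω) - (d + br ω) ∘ₗ iota) x) y
          + (((-1 : ℤˣ) ^ i : ℤˣ) : ℤ) • br x ((iota ∘ₗ (d + br ω) - (d + br ω) ∘ₗ iota) y)) ∧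
    -- ... and `[L_ξ^ω, ι_ξ] = [L_ξ, ι_ξ]`, independently of `ω`
    (iota ∘ₗ (d + br ω) - (d + br ω) ∘ₗ iota) ∘ₗ iota
        - iota ∘ₗ ((iota ∘ₗ (d + br ω) - (d + br ω) ∘ₗ iota))
      = (iota ∘ₗ d - d ∘ₗ iota) ∘ₗ iota - iota ∘ₗ (iota ∘ₗ d - d ∘ₗ iota) :=
  lie_derivative_commutator_independent_of_connection_general 𝒜 br iota d ω hiota_mem hiota_der
    hd_der had_der hι2ω
end

section
/- On points (the codimension-3 stratum), the vertex action S^{(3)} = Σ ½ Tr([c,c] ∧ (ε_a ξ^a + ε_m ξ^m + ε_n ξ^n)) and vertex vector field Q^{(3)}c = ½[c,c], Q^{(3)}ξ^μ = Σ_ν [c, ε_ν ξ^ν]^{(μ)} satisfy the master equation ι_{Q^{(3)}} ι_{Q^{(3)}} ϖ^{(3)} = 0, where ϖ^{(3)} = -Σ_μ Tr(ε_μ δξ^μ ∧ δc); equivalently Q^{(3)}(S^{(3)}) = 0. -/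
/-!
For odd `c`, graded Jacobi gives `[c,[c,c]] = -2[c,[c,c]]`, so `[c,[c,c]] = 0` once there is no
`3`-torsion. Graded antisymmetry then kills `[[c,c],c]`, and ad-invariance of the pairing moves
the outer bracket of `Tr([c,c] ∧ [c,v])` onto `[c,[c,c]]`. Hence every term of `Q⁽³⁾(S⁽³⁾)`
vanishes separately.
-/

section GradedBracket

variable {R L : Type*} [CommRing R] [AddCommGroup L] [Module R L]
  (𝒜 : ℤ → Submodule R L) (br : L →ₗ[R] L →ₗ[R] L)

def BracketRespectsGrading : Prop :=
  ∀ (i j : ℤ) (x y : L), x ∈ 𝒜 i → y ∈ 𝒜 j → br x y ∈ 𝒜 (i + j)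

def GradedAntisymm : Prop :=
  ∀ (i j : ℤ) (x y : L), x ∈ 𝒜 i → y ∈ 𝒜 j →
    br x y = -(((-1 : ℤˣ) ^ (i * j) : ℤˣ) : ℤ) • br y x

def GradedJacobi : Prop :=
  ∀ (i j : ℤ) (x y z : L), x ∈ 𝒜 i → y ∈ 𝒜 j →
    br x (br y z) = br (br x y) z + (((-1 : ℤˣ) ^ (i * j) : ℤˣ) : ℤ) • br y (br x z)

def PairingAdInvariant (T : L →ₗ[R] L →ₗ[R] R) : Prop :=
  ∀ (i j : ℤ) (a x y : L), a ∈ 𝒜 i → x ∈ 𝒜 j →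
    T (br a x) y + (((-1 : ℤˣ) ^ (i * j) : ℤˣ) : ℤ) • T x (br a y) = 0

variable {𝒜 br} {c : L}

theorem bracket_self_mem_two (hgr : BracketRespectsGrading 𝒜 br) (hc : c ∈ 𝒜 1) :
    br c c ∈ 𝒜 2 :=
  hgr 1 1 c c hc hc

theorem bracket_self_bracket_self_eq_zero [IsAddTorsionFree L]
    (hgr : BracketRespectsGrading 𝒜 br) (hanti : GradedAntisymm 𝒜 br)
    (hjacobi : GradedJacobi 𝒜 br) (hc : c ∈ 𝒜 1) :
    br c (br c c) = 0 := by
  have hanti_cc : br (br c c) c = -br c (br c c) := by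
    simpa using hanti 2 1 (br c c) c (bracket_self_mem_two hgr hc) hc
  have hjac : br c (br c c) = br (br c c) c - br c (br c c) := by
    simpa [sub_eq_add_neg] using hjacobi 1 1 c c c hc hc
  rw [hanti_cc] at hjac
  have h3 : (3 : ℕ) • br c (br c c) = 0 := by
    rw [succ_nsmul, two_nsmul]
    nth_rewrite 1 [hjac]
    abel
  exact (nsmul_eq_zero_iff_right three_ne_zero).mp h3

theorem bracket_bracket_self_self_eq_zero [IsAddTorsionFree L]
    (hgr : BracketRespectsGrading 𝒜 br) (hanti : GradedAntisymm 𝒜 br)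
    (hjacobi : GradedJacobi 𝒜 br) (hc : c ∈ 𝒜 1) :
    br (br c c) c = 0 := by
  have h := hanti 2 1 (br c c) c (bracket_self_mem_two hgr hc) hc
  rwa [bracket_self_bracket_self_eq_zero hgr hanti hjacobi hc, smul_zero] at h

theorem pairing_bracket_self_bracket_eq_zero [IsAddTorsionFree L] {T : L →ₗ[R] L →ₗ[R] R}
    (hgr : BracketRespectsGrading 𝒜 br) (hanti : GradedAntisymm 𝒜 br)
    (hjacobi : GradedJacobi 𝒜 br) (hT : PairingAdInvariant 𝒜 br T) (hc : c ∈ 𝒜 1) (v : L) :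
    T (br c c) (br c v) = 0 := by
  have h := hT 1 2 c (br c c) v hc (bracket_self_mem_two hgr hc)
  simpa [bracket_self_bracket_self_eq_zero hgr hanti hjacobi hc] using h

end GradedBracket

theorem vertex_master_equation_general
    {L : Type*} [AddCommGroup L] [Module ℝ L]
    (𝒜 : ℤ → Submodule ℝ L)
    (br : L →ₗ[ℝ] L →ₗ[ℝ] L)
    (T : L →ₗ[ℝ] L →ₗ[ℝ] ℝ)
    (hbr_mem : ∀ (i j : ℤ) (x y : L), x ∈ 𝒜 i → y ∈ 𝒜 j → br x y ∈ 𝒜 (i + j))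
    (hanti : ∀ (i j : ℤ) (x y : L), x ∈ 𝒜 i → y ∈ 𝒜 j →
      br x y = -(((-1 : ℤˣ) ^ (i * j) : ℤˣ) : ℤ) • br y x)
    (hjacobi : ∀ (i j : ℤ) (x y z : L), x ∈ 𝒜 i → y ∈ 𝒜 j →
      br x (br y z) = br (br x y) z + (((-1 : ℤˣ) ^ (i * j) : ℤˣ) : ℤ) • br y (br x z))
    -- ad-invariance of the trace pairing
    (hT_inv : ∀ (i j : ℤ) (a x y : L), a ∈ 𝒜 i → x ∈ 𝒜 j →
      T (br a x) y + (((-1 : ℤˣ) ^ (i * j) : ℤˣ) : ℤ) • T x (br a y) = 0)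
    (c v : L) (hc : c ∈ 𝒜 1) :
    (2⁻¹ : ℝ) • (T (br ((2⁻¹ : ℝ) • br c c) c) v + T (br c ((2⁻¹ : ℝ) • br c c)) v)
      + (2⁻¹ : ℝ) • T (br c c) (br c v) = 0 := by
  have : IsAddTorsionFree L := .of_isTorsionFree ℝ L
  simp only [map_smul, LinearMap.smul_apply,
    bracket_bracket_self_self_eq_zero hbr_mem hanti hjacobi hc,
    bracket_self_bracket_self_eq_zero hbr_mem hanti hjacobi hc,
    pairing_bracket_self_bracket_eq_zero hbr_mem hanti hjacobi hT_inv hc v,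
    map_zero, LinearMap.zero_apply, smul_zero, add_zero]

/-- The vertex (codimension-3) master equation of Proposition 3.3, reduced to a
finite-dimensional super-algebra computation.  `L` is a graded module carrying the ghost
`c ∈ 𝒜 1` (valued in `Λ²V ≅ so(2,1)`) and the odd element `v = ε_a ξᵃ + ε_m ξᵐ + ε_n ξⁿ ∈ 𝒜 1`;
`br` is the graded bracket and `T x y` models the invariant trace pairing `Tr(x ∧ y)`.  For
the vertex action `S⁽³⁾ = ½ Tr([c,c] ∧ v)` and the vertex vector field
`Q⁽³⁾c = ½[c,c]`, `Q⁽³⁾v = [c,v]`, one has `ι_{Q⁽³⁾} ι_{Q⁽³⁾} ϖ⁽³⁾ = 0`, equivalently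
`Q⁽³⁾(S⁽³⁾) = ½ Tr(([Qc,c] + [c,Qc]) ∧ v) + ½ Tr([c,c] ∧ [c,v]) = 0`. -/
theorem vertex_master_equation
    {L : Type*} [AddCommGroup L] [Module ℝ L]
    (𝒜 : ℤ → Submodule ℝ L)
    (br : L →ₗ[ℝ] L →ₗ[ℝ] L)
    (T : L →ₗ[ℝ] L →ₗ[ℝ] ℝ)
    (hbr_mem : ∀ (i j : ℤ) (x y : L), x ∈ 𝒜 i → y ∈ 𝒜 j → br x y ∈ 𝒜 (i + j))
    (hanti : ∀ (i j : ℤ) (x y : L), x ∈ 𝒜 i → y ∈ 𝒜 j →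
      br x y = -(((-1 : ℤˣ) ^ (i * j) : ℤˣ) : ℤ) • br y x)
    (hjacobi : ∀ (i j : ℤ) (x y z : L), x ∈ 𝒜 i → y ∈ 𝒜 j →
      br x (br y z) = br (br x y) z + (((-1 : ℤˣ) ^ (i * j) : ℤˣ) : ℤ) • br y (br x z))
    -- ad-invariance of the trace pairing
    (hT_inv : ∀ (i j : ℤ) (a x y : L), a ∈ 𝒜 i → x ∈ 𝒜 j →
      T (br a x) y + (((-1 : ℤˣ) ^ (i * j) : ℤˣ) : ℤ) • T x (br a y) = 0)
    (c v : L) (hc : c ∈ 𝒜 1) (hv : v ∈ 𝒜 1) :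
    (2⁻¹ : ℝ) • (T (br ((2⁻¹ : ℝ) • br c c) c) v + T (br c ((2⁻¹ : ℝ) • br c c)) v)
      + (2⁻¹ : ℝ) • T (br c c) (br c v) = 0 :=
  vertex_master_equation_general 𝒜 br T hbr_mem hanti hjacobi hT_inv c v hc
end
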